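/- Let ⊑ be a preorder on a set X with strict part ⊏, let Y ⊆ X, and let ⊴ be a prelinearization on Y of the restriction of ⊑ to Y. For each k < 3 let D_k ⊆ X with Y ⊆ D_k, and let R_k be a prelinearization on D_k of the restriction of ⊑ to D_k such that R_k ∩ (Y × Y) = ⊴. Assume: (i) D_i ∩ D_j ⊆ Y for all i ≠ j; and (ii) interpolation: for all i ≠ j and all x ∈ D_i, y ∈ D_j with x ⊑ y, there exists z ∈ Y with x ⊑ z ⊑ y. Then R_0, R_1, R_2 have a common extension: there exists a prelinearization ≤ of ⊑ on all of X such that for each k < 3, R_k ⊆ ≤ and strict(R_k) is contained in the strict part of ≤. -/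
import Mathlib


/-- `R` is a prelinearization on the set `D` of (the restriction to `D` of) the preorder
`r`: `R` only relates elements of `D`, is a total preorder on `D`, extends `r` on `D`,
and respects the strict part of `r` on `D`. -/
def PrelinOn {X : Type*} (r : X → X → Prop) (D : Set X) (R : X → X → Prop) : Prop :=
  (∀ x y, R x y → x ∈ D ∧ y ∈ D) ∧
  (∀ x ∈ D, ∀ y ∈ D, R x y ∨ R y x) ∧
  (∀ x y z, R x y → R y z → R x z) ∧
  (∀ x ∈ D, ∀ y ∈ D, r x y → R x y) ∧
  (∀ x ∈ D, ∀ y ∈ D, r x y → ¬ r y x → ¬ R y x)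

/-- Any reflexive transitive relation extends to a total preorder whose strict part
contains the original strict part. -/
theorem exists_total_preorder_ext {X : Type*} (T : X → X → Prop)
    (hrefl : ∀ x, T x x) (htrans : ∀ x y z, T x y → T y z → T x z) :
    ∃ le : X → X → Prop,
      (∀ x y z, le x y → le y z → le x z) ∧
      (∀ x y, le x y ∨ le y x) ∧
      (∀ x y, T x y → le x y) ∧
      (∀ x y, T x y → ¬ T y x → ¬ le y x) := by
  letI s : Setoid X := ⟨fun a b => T a b ∧ T b a,
    fun a => ⟨hrefl a, hrefl a⟩,
    fun h => ⟨h.2, h.1⟩,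
    fun h1 h2 => ⟨htrans _ _ _ h1.1 h2.1, htrans _ _ _ h2.2 h1.2⟩⟩
  let T' : Quotient s → Quotient s → Prop :=
    Quotient.lift₂ (fun a b => T a b) (by
      intro a b a' b' ha hb
      exact propext ⟨fun h => htrans _ _ _ ha.2 (htrans _ _ _ h hb.1),
        fun h => htrans _ _ _ ha.1 (htrans _ _ _ h hb.2)⟩)
  haveI : IsPartialOrder (Quotient s) T' := by
    refine { refl := ?_, trans := ?_, antisymm := ?_ }
    · intro a
      induction a using Quotient.ind
      exact hrefl _
    · intro a b c
      induction a using Quotient.ind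
      induction b using Quotient.ind
      induction c using Quotient.ind
      exact htrans _ _ _
    · intro a b
      induction a using Quotient.ind
      induction b using Quotient.ind
      intro h1 h2
      exact Quotient.sound ⟨h1, h2⟩
  obtain ⟨s', hlin, hsub⟩ := extend_partialOrder T'
  haveI := hlin
  refine ⟨fun x y => s' ⟦x⟧ ⟦y⟧, ?_, ?_, ?_, ?_⟩
  · intro x y z h1 h2; exact _root_.trans h1 h2
  · intro x y; exact total_of s' _ _
  · intro x y h; exact hsub _ _ h
  · intro x y h1 h2 h3
    have h4 : s' ⟦x⟧ ⟦y⟧ := hsub _ _ h1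
    have h5 : (⟦x⟧ : Quotient s) = ⟦y⟧ := antisymm h4 h3
    exact h2 (Quotient.exact h5).2

/-- **(3,2)-amalgamation of prelinearizations.** Given a preorder `r` on `X`, a set `Y`, a
prelinearization `les` of `r` on `Y`, and three prelinearizations `R k` of `r` on sets
`D k ⊇ Y` agreeing with `les` on `Y`, such that the `D k` pairwise intersect inside `Y`
and `r`-comparisons across distinct `D i`, `D j` interpolate through `Y`, there is a
prelinearization `le` of `r` on all of `X` extending each `R k` together with its strict
part. -/
theorem amalgamation_of_three_prelinearizations {X : Type*} (r : X → X → Prop)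
    (hrefl : ∀ x, r x x) (htrans : ∀ x y z, r x y → r y z → r x z)
    (Y : Set X) (les : X → X → Prop) (hles : PrelinOn r Y les)
    (D : Fin 3 → Set X) (hYD : ∀ k, Y ⊆ D k)
    (R : Fin 3 → X → X → Prop) (hR : ∀ k, PrelinOn r (D k) (R k))
    (hagree : ∀ k, ∀ x ∈ Y, ∀ y ∈ Y, (R k x y ↔ les x y))
    (hdisj : ∀ i j, i ≠ j → ∀ x, x ∈ D i → x ∈ D j → x ∈ Y)
    (hinterp : ∀ i j, i ≠ j → ∀ x ∈ D i, ∀ y ∈ D j, r x y → ∃ z ∈ Y, r x z ∧ r z y) :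
    ∃ le : X → X → Prop,
      (∀ x y z, le x y → le y z → le x z) ∧
      (∀ x y, le x y ∨ le y x) ∧
      (∀ x y, r x y → le x y) ∧
      (∀ x y, r x y → ¬ r y x → le x y ∧ ¬ le y x) ∧
      (∀ k : Fin 3, ∀ x y, R k x y → le x y) ∧
      (∀ k : Fin 3, ∀ x y, R k x y → ¬ R k y x → le x y ∧ ¬ le y x) := by
  -- basic facts about the prelinearizations R k
  have Rdom : ∀ k x y, R k x y → x ∈ D k ∧ y ∈ D k := fun k => (hR k).1
  have Rtrans : ∀ k x y z, R k x y → R k y z → R k x z := fun k => (hR k).2.2.1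
  have Rext : ∀ k x, x ∈ D k → ∀ y, y ∈ D k → r x y → R k x y := by
    intro k x hx y hy h; exact (hR k).2.2.2.1 x hx y hy h
  have Rstrict : ∀ k x, x ∈ D k → ∀ y, y ∈ D k → r x y → ¬ r y x → ¬ R k y x := by
    intro k x hx y hy h h'; exact (hR k).2.2.2.2 x hx y hy h h'
  -- agreement on Y between any two R's
  have agree : ∀ i j z, z ∈ Y → ∀ w, w ∈ Y → R i z w → R j z w := by
    intro i j z hz w hw h
    exact (hagree j z hz w hw).2 ((hagree i z hz w hw).1 h)
  -- the amalgamated relation: r, or a single R-block padded by r, or two R-blocks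
  -- joined through Y, padded by r
  set T : X → X → Prop := fun x y =>
    r x y ∨ (∃ k a b, r x a ∧ R k a b ∧ r b y) ∨
      (∃ i j a w b, r x a ∧ R i a w ∧ w ∈ Y ∧ R j w b ∧ r b y) with hT
  -- bridging two blocks across an r-step
  have bridge : ∀ i j b a, b ∈ D i → a ∈ D j → r b a →
      ∀ p, R i p b → ∀ q, R j a q →
        R i p q ∨ ∃ w ∈ Y, R i p w ∧ R j w q := by
    intro i j b a hb ha hba p hp q hq
    by_cases hij : i = j
    · subst hij
      exact Or.inl (Rtrans i _ _ _ hp (Rtrans i _ _ _ (Rext i b hb a ha hba) hq))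
    · obtain ⟨w, hw, h1, h2⟩ := hinterp i j hij b hb a ha hba
      exact Or.inr ⟨w, hw, Rtrans i _ _ _ hp (Rext i b hb w (hYD i hw) h1),
        Rtrans j _ _ _ (Rext j w (hYD j hw) a ha h2) hq⟩
  -- T is reflexive
  have Trefl : ∀ x, T x x := fun x => Or.inl (hrefl x)
  -- T is transitive
  have Ttrans : ∀ x y z, T x y → T y z → T x z := by
    intro x y z hxy hyz
    rcases hxy with h1 | ⟨k, a, b, hxa, hab, hby⟩ | ⟨i, j, a, w, b, hxa, haw, hwY, hwb, hby⟩
    · rcases hyz with h2 | ⟨k, a, b, hya, hab, hbz⟩ | ⟨i, j, a, w, b, hya, haw, hwY, hwb, hbz⟩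
      · exact Or.inl (htrans _ _ _ h1 h2)
      · exact Or.inr (Or.inl ⟨k, a, b, htrans _ _ _ h1 hya, hab, hbz⟩)
      · exact Or.inr (Or.inr ⟨i, j, a, w, b, htrans _ _ _ h1 hya, haw, hwY, hwb, hbz⟩)
    · rcases hyz with h2 | ⟨k', a', b', hya, hab', hbz⟩ | ⟨i', j', a', w', b', hya, haw', hwY', hwb', hbz⟩
      · exact Or.inr (Or.inl ⟨k, a, b, hxa, hab, htrans _ _ _ hby h2⟩)
      · -- 1-block then 1-block
        have hba' : r b a' := htrans _ _ _ hby hya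
        rcases bridge k k' b a' (Rdom k a b hab).2 (Rdom k' a' b' hab').1 hba' a hab b' hab' with
          h | ⟨w, hw, h1, h2⟩
        · exact Or.inr (Or.inl ⟨k, a, b', hxa, h, hbz⟩)
        · exact Or.inr (Or.inr ⟨k, k', a, w, b', hxa, h1, hw, h2, hbz⟩)
      · -- 1-block then 2-block
        have hba' : r b a' := htrans _ _ _ hby hya
        rcases bridge k i' b a' (Rdom k a b hab).2 (Rdom i' a' w' haw').1 hba' a hab w' haw' with
          h | ⟨w, hw, h1, h2⟩
        · exact Or.inr (Or.inr ⟨k, j', a, w', b', hxa, h, hwY', hwb', hbz⟩)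
        · have : R k w w' := agree i' k w hw w' hwY' h2
          exact Or.inr (Or.inr ⟨k, j', a, w', b', hxa, Rtrans k _ _ _ h1 this, hwY', hwb', hbz⟩)
    · rcases hyz with h2 | ⟨k', a', b', hya, hab', hbz⟩ | ⟨i', j', a', w', b', hya, haw', hwY', hwb', hbz⟩
      · exact Or.inr (Or.inr ⟨i, j, a, w, b, hxa, haw, hwY, hwb, htrans _ _ _ hby h2⟩)
      · -- 2-block then 1-block
        have hba' : r b a' := htrans _ _ _ hby hya
        rcases bridge j k' b a' (Rdom j w b hwb).2 (Rdom k' a' b' hab').1 hba' w hwb b' hab' with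
          h | ⟨u, hu, h1, h2⟩
        · exact Or.inr (Or.inr ⟨i, j, a, w, b', hxa, haw, hwY, h, hbz⟩)
        · have : R i w u := agree j i w hwY u hu h1
          exact Or.inr (Or.inr ⟨i, k', a, u, b', hxa, Rtrans i _ _ _ haw this, hu, h2, hbz⟩)
      · -- 2-block then 2-block
        have hba' : r b a' := htrans _ _ _ hby hya
        rcases bridge j i' b a' (Rdom j w b hwb).2 (Rdom i' a' w' haw').1 hba' w hwb w' haw' with
          h | ⟨u, hu, h1, h2⟩
        · have : R i w w' := agree j i w hwY w' hwY' h
          exact Or.inr (Or.inr ⟨i, j', a, w', b', hxa, Rtrans i _ _ _ haw this, hwY', hwb', hbz⟩)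
        · have h1' : R i w u := agree j i w hwY u hu h1
          have h2' : R i u w' := agree i' i u hu w' hwY' h2
          exact Or.inr (Or.inr ⟨i, j', a, w', b', hxa,
            Rtrans i _ _ _ haw (Rtrans i _ _ _ h1' h2'), hwY', hwb', hbz⟩)
  -- Key lemma 1: if T y x and r x y then r y x (so strict r-pairs stay strict).
  have key1 : ∀ x y, T y x → r x y → r y x := by
    intro x y hT1 hxy
    rcases hT1 with h | ⟨k, a, b, hya, hab, hbx⟩ | ⟨i, j, a, w, b, hya, haw, hwY, hwb, hbx⟩
    · exact h
    · have hba : r b a := htrans _ _ _ hbx (htrans _ _ _ hxy hya)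
      have hab' : r a b := by
        by_contra hc
        exact Rstrict k b (Rdom k a b hab).2 a (Rdom k a b hab).1 hba hc hab
      exact htrans _ _ _ hya (htrans _ _ _ hab' hbx)
    · have haD : a ∈ D i := (Rdom i a w haw).1
      have hbD : b ∈ D j := (Rdom j w b hwb).2
      have hba : r b a := htrans _ _ _ hbx (htrans _ _ _ hxy hya)
      have hab' : r a b := by
        by_contra hc
        by_cases hij : i = j
        · subst hij
          exact Rstrict i b hbD a haD hba hc (Rtrans i _ _ _ haw hwb)
        · obtain ⟨u, hu, hbu, hua⟩ := hinterp j i (Ne.symm hij) b hbD a haD hba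
          by_cases hau : r a u
          · -- then ¬ r u b, so r b u is strict, contradict via R j u b
            have hub : ¬ r u b := fun h => hc (htrans _ _ _ hau h)
            have hRuw : R j u w := agree i j u hu w hwY
              (Rtrans i _ _ _ (Rext i u (hYD i hu) a haD hua) haw)
            exact Rstrict j b hbD u (hYD j hu) hbu hub (Rtrans j _ _ _ hRuw hwb)
          · -- r u a is strict, contradict via R i a u
            have hRwu : R i w u := agree j i w hwY u hu
              (Rtrans j _ _ _ hwb (Rext j b hbD u (hYD j hu) hbu))
            exact Rstrict i u (hYD i hu) a haD hua hau (Rtrans i _ _ _ haw hRwu)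
      exact htrans _ _ _ hya (htrans _ _ _ hab' hbx)
  -- hop lemmas for key lemma 2
  have hopL : ∀ k y, y ∈ D k → ∀ a i w, r y a → R i a w → w ∈ Y → R k y w := by
    intro k y hy a i w hya haw hw
    have haD : a ∈ D i := (Rdom i a w haw).1
    by_cases hik : i = k
    · subst hik
      exact Rtrans i _ _ _ (Rext i y hy a haD hya) haw
    · obtain ⟨u, hu, h1, h2⟩ := hinterp k i (fun h => hik h.symm) y hy a haD hya
      have : R i u w := Rtrans i _ _ _ (Rext i u (hYD i hu) a haD h2) haw
      exact Rtrans k _ _ _ (Rext k y hy u (hYD k hu) h1) (agree i k u hu w hw this)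
  have hopR : ∀ k x, x ∈ D k → ∀ b j w, r b x → R j w b → w ∈ Y → R k w x := by
    intro k x hx b j w hbx hwb hw
    have hbD : b ∈ D j := (Rdom j w b hwb).2
    by_cases hjk : j = k
    · subst hjk
      exact Rtrans j _ _ _ hwb (Rext j b hbD x hx hbx)
    · obtain ⟨v, hv, h1, h2⟩ := hinterp j k hjk b hbD x hx hbx
      have : R j w v := Rtrans j _ _ _ hwb (Rext j b hbD v (hYD j hv) h1)
      exact Rtrans k _ _ _ (agree j k w hw v hv this) (Rext k v (hYD k hv) x hx h2)
  -- Key lemma 2: T restricted to D k implies R k.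
  have key2 : ∀ k x y, x ∈ D k → y ∈ D k → T x y → R k x y := by
    intro k x y hx hy hT1
    rcases hT1 with h | ⟨i, a, b, hxa, hab, hby⟩ | ⟨i, j, a, w, b, hxa, haw, hwY, hwb, hby⟩
    · exact Rext k x hx y hy h
    · have haD : a ∈ D i := (Rdom i a b hab).1
      have hbD : b ∈ D i := (Rdom i a b hab).2
      by_cases hik : i = k
      · subst hik
        exact Rtrans i _ _ _ (Rext i x hx a haD hxa)
          (Rtrans i _ _ _ hab (Rext i b hbD y hy hby))
      · obtain ⟨u, hu, h1, h2⟩ := hinterp k i (fun h => hik h.symm) x hx a haD hxa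
        obtain ⟨v, hv, h3, h4⟩ := hinterp i k hik b hbD y hy hby
        have huv : R i u v := Rtrans i _ _ _ (Rext i u (hYD i hu) a haD h2)
          (Rtrans i _ _ _ hab (Rext i b hbD v (hYD i hv) h3))
        exact Rtrans k _ _ _ (Rext k x hx u (hYD k hu) h1)
          (Rtrans k _ _ _ (agree i k u hu v hv huv) (Rext k v (hYD k hv) y hy h4))
    · exact Rtrans k _ _ _ (hopL k x hx a i w hxa haw hwY) (hopR k y hy b j w hby hwb hwY)
  -- now extend T to a total preorder
  obtain ⟨le, ltrans, ltotal, lext, lstrict⟩ := exists_total_preorder_ext T Trefl Ttrans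
  have hrT : ∀ x y, r x y → T x y := fun x y h => Or.inl h
  have hRT : ∀ k x y, R k x y → T x y :=
    fun k x y h => Or.inr (Or.inl ⟨k, x, y, hrefl x, h, hrefl y⟩)
  refine ⟨le, ltrans, ltotal, fun x y h => lext _ _ (hrT _ _ h), ?_, 
    fun k x y h => lext _ _ (hRT k _ _ h), ?_⟩
  · intro x y h1 h2
    exact ⟨lext _ _ (hrT _ _ h1),
      lstrict _ _ (hrT _ _ h1) (fun hc => h2 (key1 x y hc h1))⟩
  · intro k x y h1 h2
    refine ⟨lext _ _ (hRT k _ _ h1), lstrict _ _ (hRT k _ _ h1) ?_⟩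
    intro hc
    exact h2 (key2 k y x (Rdom k x y h1).2 (Rdom k x y h1).1 hc)
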